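/- Let f be an elliptic Möbius map with fixed points α, β, conjugate via h(z) = (z − β)/(z − α) to an irrational rotation z ↦ e^{iθ}z. If b₀ ∈ ℂ does not lie on the invariant extended line h⁻¹(S¹) and b₀ ∉ {α, β}, then the orbit {fⁿ(b₀) : n ∈ ℕ} is dense in the circle h⁻¹(C_r), where r = |h(b₀)| ≠ 0, 1, and this circle has positive distance from the invariant line ℓ = h⁻¹(S¹) \ {∞}. -/

import Mathlib

open OnePoint Complex

open Classical in
/-- The Möbius map `z ↦ (az+b)/(cz+d)` as a self-map of the one-point
compactification (Riemann sphere for `K = ℂ`, extended real line for `K = ℝ`). -/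
noncomputable def mob {K : Type*} [Field K] (a b c d : K) : OnePoint K → OnePoint K :=
  fun z => Option.rec (motive := fun _ => OnePoint K)
    (if c = 0 then (∞ : OnePoint K) else ((a / c : K) : OnePoint K))
    (fun w => if c * w + d = 0 then (∞ : OnePoint K)
      else (((a * w + b) / (c * w + d) : K) : OnePoint K)) z

/-!
Conjugating by `h(z) = (z - β)/(z - α)` turns the orbit of `b₀` into the orbit
`eⁱⁿᶿ h(b₀)` of an irrational rotation, which is dense in the circle `|w| = r`; pulling back
by the continuous inverse `w ↦ (αw - β)/(w - 1)` gives density in `h⁻¹(C_r)`.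
For the distance: on `h⁻¹(C_r)` we have `|x - β| = r|x - α|`, on `ℓ` we have
`|y - α| = |y - β|`, and two triangle inequalities give
`|x - y| ≥ |r - 1| |α - β| / (2(1 + r))`.
-/

section Mob

variable {K : Type*} [Field K]

lemma mob_coe {a b c d w : K} (h : c * w + d ≠ 0) :
    mob a b c d (w : OnePoint K) = (((a * w + b) / (c * w + d) : K) : OnePoint K) :=
  if_neg h

lemma mob_coe_of_eq_zero {a b c d w : K} (h : c * w + d = 0) :
    mob a b c d (w : OnePoint K) = ∞ :=
  if_pos h

lemma mob_infty {a b c d : K} (h : c ≠ 0) : mob a b c d ∞ = ((a / c : K) : OnePoint K) :=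
  if_neg h

lemma iterate_mob_mul_coe (e w : K) (n : ℕ) :
    (mob e 0 0 1)^[n] (w : OnePoint K) = ((e ^ n * w : K) : OnePoint K) := by
  induction n with
  | zero => simp
  | succ n ih =>
    rw [Function.iterate_succ_apply', ih, mob_coe (by simp)]
    congr 1
    ring

lemma mob_coe_sub_div_sub {α β z : K} (hz : z ≠ α) :
    mob 1 (-β) 1 (-α) (z : OnePoint K) = (((z - β) / (z - α) : K) : OnePoint K) := by
  rw [mob_coe (by rwa [one_mul, ← sub_eq_add_neg, sub_ne_zero])]
  simp only [one_mul, ← sub_eq_add_neg]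

lemma eq_coe_of_mob_eq_coe {α β t : K} (ht : t ≠ 1) {z : OnePoint K}
    (hz : mob 1 (-β) 1 (-α) z = (t : OnePoint K)) :
    z = (((α * t - β) / (t - 1) : K) : OnePoint K) := by
  induction z using OnePoint.rec with
  | infty =>
    rw [mob_infty one_ne_zero, div_one] at hz
    exact absurd (OnePoint.coe_injective hz).symm ht
  | coe z =>
    by_cases hzα : 1 * z + -α = 0
    · rw [mob_coe_of_eq_zero hzα] at hz
      exact absurd hz (OnePoint.infty_ne_coe t)
    rw [mob_coe hzα] at hz
    have hzt := (div_eq_iff hzα).1 (OnePoint.coe_injective hz)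
    congr 1
    rw [eq_div_iff (sub_ne_zero.2 ht)]
    linear_combination -hzt

end Mob

lemma denseRange_circleExp_pow_succ {θ : ℝ} (hθ : Irrational (θ / (2 * Real.pi))) :
    DenseRange fun n : ℕ => Circle.exp θ ^ (n + 1) := by
  have h2π : 2 * Real.pi ≠ 0 := by positivity
  have hzpow : DenseRange fun m : ℤ => Circle.exp θ ^ m := by
    have := (AddCircle.homeomorphCircle h2π).surjective.denseRange.comp
      (AddCircle.denseRange_zsmul_coe_iff.2 hθ) (AddCircle.homeomorphCircle h2π).continuous
    convert this using 2 with m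
    simp [AddCircle.homeomorphCircle_apply, AddCircle.toCircle_zsmul,
      AddCircle.toCircle_apply_mk, h2π]
  have hpow := denseRange_zpow_iff_pow.1 hzpow
  simpa only [Function.comp_def, pow_succ', Homeomorph.coe_mulLeft] using
    (Homeomorph.mulLeft (Circle.exp θ)).surjective.denseRange.comp hpow
      (Homeomorph.mulLeft _).continuous

lemma mem_closure_range_exp_pow_succ_mul {θ : ℝ} (hθ : Irrational (θ / (2 * Real.pi)))
    {w v : ℂ} (hw : w ≠ 0) (hv : ‖v‖ = ‖w‖) :
    v ∈ closure (Set.range fun n : ℕ => exp (θ * I) ^ (n + 1) * w) := by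
  have hu : v / w ∈ Submonoid.unitSphere ℂ := by
    simp [Submonoid.unitSphere, hv, norm_ne_zero_iff.2 hw]
  have hcont : Continuous fun u : Circle => (u : ℂ) * w := by fun_prop
  have := mem_closure_image hcont.continuousAt (denseRange_circleExp_pow_succ hθ ⟨v / w, hu⟩)
  simpa [div_mul_cancel₀ _ hw, ← Set.range_comp, Function.comp_def] using this

lemma div_le_dist_of_dist_eq_mul {X : Type*} [PseudoMetricSpace X] {r : ℝ} (hr : 0 ≤ r)
    {α β x y : X} (hx : dist x β = r * dist x α) (hy : dist y α = dist y β) :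
    |r - 1| * dist α β / (2 * (1 + r)) ≤ dist x y := by
  have hxy : |r - 1| * dist x α ≤ 2 * dist x y := by
    calc |r - 1| * dist x α = |dist x β - dist x α| := by
          rw [hx, ← sub_one_mul, abs_mul, abs_of_nonneg dist_nonneg]
      _ = |(dist x β - dist y β) + (dist y α - dist x α)| := by rw [hy]; ring_nf
      _ ≤ |dist x β - dist y β| + |dist y α - dist x α| := abs_add_le _ _
      _ ≤ dist x y + dist x y := by
          gcongr
          · exact abs_dist_sub_le _ _ _
          · rw [abs_sub_comm]; exact abs_dist_sub_le _ _ _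
      _ = 2 * dist x y := by ring
  have hαβ : dist α β ≤ (1 + r) * dist x α := by
    calc dist α β ≤ dist x α + dist x β := dist_triangle_left _ _ _
      _ = (1 + r) * dist x α := by rw [hx]; ring
  rw [div_le_iff₀ (by positivity)]
  calc |r - 1| * dist α β ≤ |r - 1| * ((1 + r) * dist x α) := by gcongr
    _ = (1 + r) * (|r - 1| * dist x α) := by ring
    _ ≤ (1 + r) * (2 * dist x y) := by gcongr
    _ = dist x y * (2 * (1 + r)) := by ring

lemma mem_closure_orbit_of_semiconj {f : OnePoint ℂ → OnePoint ℂ} {α β : ℂ} (hαβ : α ≠ β)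
    {θ : ℝ} (hθ : Irrational (θ / (2 * Real.pi)))
    (hf : Function.Semiconj (mob 1 (-β) 1 (-α)) f (mob (exp (θ * I)) 0 0 1))
    {b y : ℂ} (hbα : b ≠ α) (hbβ : b ≠ β) (hline : ‖(b - β) / (b - α)‖ ≠ 1)
    (hyα : y ≠ α) (hy : ‖(y - β) / (y - α)‖ = ‖(b - β) / (b - α)‖) :
    y ∈ closure {w : ℂ | ∃ n : ℕ, 1 ≤ n ∧ f^[n] (b : OnePoint ℂ) = (w : OnePoint ℂ)} := by
  set hInv : ℂ → ℂ := fun t => (α * t - β) / (t - 1)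
  have horbit (n : ℕ) :
      f^[n] (b : OnePoint ℂ) = (hInv (exp (θ * I) ^ n * ((b - β) / (b - α))) : ℂ) := by
    refine eq_coe_of_mob_eq_coe (fun h => hline ?_) ?_
    · simpa [norm_exp_ofReal_mul_I] using congrArg norm h
    · rw [hf.iterate_right n b, mob_coe_sub_div_sub hbα, iterate_mob_mul_coe]
  set t := (y - β) / (y - α)
  have ht : t ≠ 1 := fun h =>
    hαβ (by linear_combination (div_eq_one_iff_eq (sub_ne_zero.2 hyα)).1 h)
  have hyt : y = hInv t :=
    OnePoint.coe_injective (eq_coe_of_mob_eq_coe ht (mob_coe_sub_div_sub hyα))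
  have hcont : ContinuousAt hInv t := by
    fun_prop (disch := exact sub_ne_zero.2 ht)
  have hw : (b - β) / (b - α) ≠ 0 := div_ne_zero (sub_ne_zero.2 hbβ) (sub_ne_zero.2 hbα)
  have := mem_closure_image hcont (mem_closure_range_exp_pow_succ_mul hθ hw hy)
  rw [← hyt, ← Set.range_comp] at this
  refine closure_mono ?_ this
  rintro _ ⟨n, rfl⟩
  exact ⟨n + 1, n.succ_pos, horbit (n + 1)⟩

theorem stmt19_general (a b c d : ℂ)
    (α β : ℂ) (hαβ : α ≠ β)
    (θ : ℝ) (hirr : Irrational (θ / (2 * Real.pi)))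
    (hconj : ∀ z : OnePoint ℂ,
      mob 1 (-β) 1 (-α) (mob a b c d z) =
        mob (Complex.exp ((θ : ℂ) * Complex.I)) 0 0 1 (mob 1 (-β) 1 (-α) z))
    (b₀ : ℂ) (hb₀α : b₀ ≠ α) (hb₀β : b₀ ≠ β)
    (hline : ‖(b₀ - β) / (b₀ - α)‖ ≠ 1) :
    (‖(b₀ - β) / (b₀ - α)‖ ≠ 0) ∧
    (∀ y : ℂ, y ≠ α →
      ‖(y - β) / (y - α)‖ = ‖(b₀ - β) / (b₀ - α)‖ →
      y ∈ closure {w : ℂ | ∃ n : ℕ, 1 ≤ n ∧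
        (mob a b c d)^[n] ((b₀ : OnePoint ℂ)) = (w : OnePoint ℂ)}) ∧
    (∃ L > (0 : ℝ), ∀ x : ℂ, x ≠ α →
      ‖(x - β) / (x - α)‖ = ‖(b₀ - β) / (b₀ - α)‖ →
      ∀ y : ℂ, ‖y - α‖ = ‖y - β‖ → L ≤ dist x y) := by
  refine ⟨norm_ne_zero_iff.2 (div_ne_zero (sub_ne_zero.2 hb₀β) (sub_ne_zero.2 hb₀α)),
    fun y hyα hy => mem_closure_orbit_of_semiconj hαβ hirr hconj hb₀α hb₀β hline hyα hy, ?_⟩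
  set r := ‖(b₀ - β) / (b₀ - α)‖
  refine ⟨|r - 1| * dist α β / (2 * (1 + r)), ?_, fun x hxα hxr y hy => ?_⟩
  · have := sub_ne_zero.2 hline
    have := dist_pos.2 hαβ
    positivity
  · refine div_le_dist_of_dist_eq_mul (norm_nonneg _) ?_ (by simpa [dist_eq] using hy)
    rw [norm_div, div_eq_iff (by simpa [sub_eq_zero] using hxα)] at hxr
    rwa [dist_eq, dist_eq]

/-- `f` elliptic with fixed points `α ≠ β`, conjugate via
`h(z) = (z - β)/(z - α)` to an irrational rotation `z ↦ e^{iθ} z`. If `b₀ ∉ {α, β}` does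
not lie on the invariant extended line (`|h(b₀)| ≠ 1`), then the orbit `{fⁿ(b₀) : n ≥ 1}`
is dense in the circle `h⁻¹(C_r)` with `r = |h(b₀)|` (`r ≠ 0, 1`), and this circle has
positive distance from the invariant line `ℓ = {z : |z - α| = |z - β|}`. -/
theorem stmt19 (a b c d : ℂ) (hc : c ≠ 0) (hdet : a * d - b * c = 1)
    (him : (a + d).im = 0) (h1 : -2 < (a + d).re) (h2 : (a + d).re < 2)
    (α β : ℂ) (hαβ : α ≠ β)
    (hα : c * α ^ 2 - (a - d) * α - b = 0)
    (hβ : c * β ^ 2 - (a - d) * β - b = 0)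
    (θ : ℝ) (hirr : Irrational (θ / (2 * Real.pi)))
    (hconj : ∀ z : OnePoint ℂ,
      mob 1 (-β) 1 (-α) (mob a b c d z) =
        mob (Complex.exp ((θ : ℂ) * Complex.I)) 0 0 1 (mob 1 (-β) 1 (-α) z))
    (b₀ : ℂ) (hb₀α : b₀ ≠ α) (hb₀β : b₀ ≠ β)
    (hline : ‖(b₀ - β) / (b₀ - α)‖ ≠ 1) :
    (‖(b₀ - β) / (b₀ - α)‖ ≠ 0) ∧
    (∀ y : ℂ, y ≠ α →
      ‖(y - β) / (y - α)‖ = ‖(b₀ - β) / (b₀ - α)‖ →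
      y ∈ closure {w : ℂ | ∃ n : ℕ, 1 ≤ n ∧
        (mob a b c d)^[n] ((b₀ : OnePoint ℂ)) = (w : OnePoint ℂ)}) ∧
    (∃ L > (0 : ℝ), ∀ x : ℂ, x ≠ α →
      ‖(x - β) / (x - α)‖ = ‖(b₀ - β) / (b₀ - α)‖ →
      ∀ y : ℂ, ‖y - α‖ = ‖y - β‖ → L ≤ dist x y) :=
  stmt19_general a b c d α β hαβ θ hirr hconj b₀ hb₀α hb₀β hline
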